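/- Let n ≥ 1, ρ : ℝⁿ → (0,∞) be any function, N > 0, and let k_u(x,y) (u > 0, x, y ∈ ℝⁿ) be a nonnegative measurable family satisfying 0 ≤ k_u(x,y) ≤ C₀ u^{−n/2} e^{−|x−y|²/(5u)} (1 + √u/ρ(x) + √u/ρ(y))^{−N} for all u, x, y. Define the subordinated Poisson kernel P_t(x,y) = (t/(2√π)) ∫_0^∞ e^{−t²/(4u)} u^{−3/2} k_u(x,y) du. Then there exists a constant C (depending only on n, N, C₀) such that P_t(x,y) ≤ C t (|x−y|² + t²)^{−(n+1)/2} (1 + (|x−y|² + t²)^{1/2}/ρ(x) + (|x−y|² + t²)^{1/2}/ρ(y))^{−N} for all x, y ∈ ℝⁿ and t > 0. -/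

import Mathlib

/-!
With `D² = |x - y|² + t²`, the Gaussian factors satisfy
`e^{-t²/4u} e^{-|x-y|²/5u} ≤ e^{-D²/10u} · e^{-D²/10u}`. One copy pays for replacing `√u` by `D`
in the weight `(1 + r/ρ(x) + r/ρ(y))^{-N}`: that weight changes by at most `max(1, D/√u)^N`, and
`e^{-r²/10} max(1, r)^N ≤ 1 + 10^m m!` for `m = ⌈N⌉`. The other copy is integrated exactly:
`∫₀^∞ e^{-a/u} u^{-s-1} du = Γ(s) a^{-s}` (substitute `u ↦ 1/u`), which with `s = (n+1)/2` and
`a = D²/10` produces the factor `D^{-(n+1)}`.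
-/

open MeasureTheory Set Real Nat

theorem integral_exp_neg_div_mul_rpow_Ioi {a s : ℝ} (ha : 0 < a) (hs : 0 < s) :
    ∫ u in Ioi (0 : ℝ), exp (-(a / u)) * u ^ (-s - 1) = Gamma s * a ^ (-s) := by
  calc ∫ u in Ioi (0 : ℝ), exp (-(a / u)) * u ^ (-s - 1)
      = ∫ u in Ioi (0 : ℝ), (|(-1 : ℝ)| * u ^ ((-1 : ℝ) - 1)) •
          ((u ^ (-1 : ℝ)) ^ (s - 1) * exp (-(a * u ^ (-1 : ℝ)))) := by
        refine setIntegral_congr_fun measurableSet_Ioi fun u (hu : 0 < u) => ?_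
        rw [rpow_neg_one, inv_rpow hu.le, ← rpow_neg hu.le, smul_eq_mul, abs_neg, abs_one, one_mul,
          ← mul_assoc, ← rpow_add hu, div_eq_mul_inv, mul_comm]
        congr 2; ring
    _ = ∫ y in Ioi (0 : ℝ), y ^ (s - 1) * exp (-(a * y)) := 
        integral_comp_rpow_Ioi (fun y => y ^ (s - 1) * exp (-(a * y))) (by norm_num)
    _ = Gamma s * a ^ (-s) := by
        rw [integral_rpow_mul_exp_neg_mul_Ioi hs ha, one_div, inv_rpow ha.le, ← rpow_neg ha.le,
          mul_comm]

theorem integrableOn_exp_neg_div_mul_rpow_Ioi {a s : ℝ} (ha : 0 < a) (hs : 0 < s) :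
    IntegrableOn (fun u : ℝ => exp (-(a / u)) * u ^ (-s - 1)) (Ioi 0) :=
  Integrable.of_integral_ne_zero <| by
    rw [integral_exp_neg_div_mul_rpow_Ioi ha hs]; positivity

theorem integral_mono_of_nonneg_right {α : Type*} [MeasurableSpace α] {μ : Measure α}
    {f g : α → ℝ} (hg : 0 ≤ᵐ[μ] g) (hgi : Integrable g μ) (h : f ≤ᵐ[μ] g) :
    ∫ a, f a ∂μ ≤ ∫ a, g a ∂μ := by
  by_cases hfi : Integrable f μ
  · exact integral_mono_ae hfi hgi h
  · rw [integral_undef hfi]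
    exact integral_nonneg_of_ae hg

theorem one_add_mul_add_mul_le {a b c : ℝ} (ha : 0 ≤ a) (hb : 0 ≤ b) :
    1 + c * a + c * b ≤ max 1 c * (1 + a + b) := by
  nlinarith [le_max_left 1 c, le_max_right 1 c]

theorem rpow_neg_le_mul_rpow_neg {A B c N : ℝ} (hA : 0 < A) (hB : 0 < B) (hc : 0 ≤ c)
    (hN : 0 ≤ N) (h : B ≤ c * A) : A ^ (-N) ≤ c ^ N * B ^ (-N) := by
  have hBN : B ^ N ≤ c ^ N * A ^ N := by
    rw [← mul_rpow hc hA.le]; exact rpow_le_rpow hB.le h hN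
  rw [rpow_neg hA.le, rpow_neg hB.le, ← div_eq_mul_inv, le_div_iff₀ (by positivity),
    inv_mul_le_iff₀ (by positivity)]
  linarith

theorem max_one_rpow_le_one_add_pow (r N : ℝ) : max 1 r ^ N ≤ 1 + (r ^ 2) ^ ⌈N⌉₊ := by
  rcases le_total r 1 with h | h
  · rw [max_eq_left h, one_rpow]; linarith [pow_nonneg (sq_nonneg r) ⌈N⌉₊]
  · rw [max_eq_right h]
    calc r ^ N ≤ r ^ (⌈N⌉₊ : ℝ) := rpow_le_rpow_of_exponent_le h (Nat.le_ceil N)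
      _ = r ^ ⌈N⌉₊ := rpow_natCast r _
      _ ≤ (r ^ 2) ^ ⌈N⌉₊ := by rw [← pow_mul]; exact pow_le_pow_right₀ h (by omega)
      _ ≤ 1 + (r ^ 2) ^ ⌈N⌉₊ := by linarith

theorem pow_mul_exp_neg_le_factorial {x : ℝ} (hx : 0 ≤ x) (m : ℕ) : x ^ m * exp (-x) ≤ m ! := by
  rw [exp_neg, ← div_eq_mul_inv, div_le_iff₀ (exp_pos x), mul_comm, ← div_le_iff₀ (by positivity)]
  exact pow_div_factorial_le_exp _ hx m

theorem exp_neg_sq_div_mul_max_one_rpow_le {c : ℝ} (hc : 0 < c) (r N : ℝ) :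
    exp (-(r ^ 2 / c)) * max 1 r ^ N ≤ 1 + c ^ ⌈N⌉₊ * ⌈N⌉₊ ! := by
  set m := ⌈N⌉₊
  have hdecay : (r ^ 2) ^ m * exp (-(r ^ 2 / c)) ≤ c ^ m * m ! := by
    rw [show (r ^ 2) ^ m = c ^ m * (r ^ 2 / c) ^ m by rw [← mul_pow, mul_div_cancel₀ _ hc.ne'],
      mul_assoc]
    gcongr
    exact pow_mul_exp_neg_le_factorial (by positivity) m
  have hexp : exp (-(r ^ 2 / c)) ≤ 1 := exp_le_one_iff.2 (by simp; positivity)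
  calc exp (-(r ^ 2 / c)) * max 1 r ^ N ≤ exp (-(r ^ 2 / c)) * (1 + (r ^ 2) ^ m) :=
        mul_le_mul_of_nonneg_left (max_one_rpow_le_one_add_pow r N) (exp_nonneg _)
    _ = exp (-(r ^ 2 / c)) + (r ^ 2) ^ m * exp (-(r ^ 2 / c)) := by ring
    _ ≤ 1 + c ^ m * m ! := add_le_add hexp hdecay

theorem exp_neg_sq_div_mul_rpow_neg_le {c N ρ₁ ρ₂ D u : ℝ} (hc : 0 < c) (hN : 0 ≤ N)
    (hρ₁ : 0 < ρ₁) (hρ₂ : 0 < ρ₂) (hD : 0 ≤ D) (hu : 0 < u) :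
    exp (-(D ^ 2) / (c * u)) * (1 + √u / ρ₁ + √u / ρ₂) ^ (-N) ≤
      (1 + c ^ ⌈N⌉₊ * ⌈N⌉₊ !) * (1 + D / ρ₁ + D / ρ₂) ^ (-N) := by
  have hsu : 0 < √u := sqrt_pos.2 hu
  set r := D / √u
  have hDr : ∀ ρ, D / ρ = r * (√u / ρ) := fun ρ => by
    rw [mul_div_assoc', div_mul_cancel₀ _ hsu.ne']
  have hcompare : 1 + D / ρ₁ + D / ρ₂ ≤ max 1 r * (1 + √u / ρ₁ + √u / ρ₂) := by
    rw [hDr, hDr]; exact one_add_mul_add_mul_le (by positivity) (by positivity)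
  have hexp : -(D ^ 2) / (c * u) = -(r ^ 2 / c) := by
    rw [div_pow, sq_sqrt hu.le]; ring
  calc exp (-(D ^ 2) / (c * u)) * (1 + √u / ρ₁ + √u / ρ₂) ^ (-N)
      ≤ exp (-(r ^ 2 / c)) * (max 1 r ^ N * (1 + D / ρ₁ + D / ρ₂) ^ (-N)) := by
        rw [hexp]
        gcongr
        exact rpow_neg_le_mul_rpow_neg (by positivity) (by positivity)
          (zero_le_one.trans (le_max_left _ _)) hN hcompare
    _ = exp (-(r ^ 2 / c)) * max 1 r ^ N * (1 + D / ρ₁ + D / ρ₂) ^ (-N) := by ring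
    _ ≤ (1 + c ^ ⌈N⌉₊ * ⌈N⌉₊ !) * (1 + D / ρ₁ + D / ρ₂) ^ (-N) := by
        gcongr
        exact exp_neg_sq_div_mul_max_one_rpow_le hc r N

theorem exp_neg_div_mul_exp_neg_div_le {d t u : ℝ} (hu : 0 < u) :
    exp (-(t ^ 2) / (4 * u)) * exp (-(d ^ 2) / (5 * u)) ≤
      exp (-((d ^ 2 + t ^ 2) / 10 / u)) * exp (-(d ^ 2 + t ^ 2) / (10 * u)) := by
  rw [← exp_add, ← exp_add, exp_le_exp]
  have : 0 ≤ t ^ 2 / (20 * u) := by positivity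
  have : (-((d ^ 2 + t ^ 2) / 10 / u) + -(d ^ 2 + t ^ 2) / (10 * u)) -
      (-(t ^ 2) / (4 * u) + -(d ^ 2) / (5 * u)) = t ^ 2 / (20 * u) := by
    field_simp; ring
  linarith

theorem subordinate_integrand_le {n C₀ N ρ₁ ρ₂ d t u κ : ℝ} (hC₀ : 0 ≤ C₀) (hN : 0 ≤ N)
    (hρ₁ : 0 < ρ₁) (hρ₂ : 0 < ρ₂) (hu : 0 < u)
    (hκ : κ ≤ C₀ * u ^ (-n / 2) * exp (-(d ^ 2) / (5 * u)) * (1 + √u / ρ₁ + √u / ρ₂) ^ (-N)) :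
    exp (-(t ^ 2) / (4 * u)) * u ^ (-(3 : ℝ) / 2) * κ ≤
      C₀ * (1 + 10 ^ ⌈N⌉₊ * ⌈N⌉₊ !) *
        (1 + √(d ^ 2 + t ^ 2) / ρ₁ + √(d ^ 2 + t ^ 2) / ρ₂) ^ (-N) *
        (exp (-((d ^ 2 + t ^ 2) / 10 / u)) * u ^ (-((n + 1) / 2) - 1)) := by
  have hweight := exp_neg_sq_div_mul_rpow_neg_le (c := 10) (D := √(d ^ 2 + t ^ 2)) (by norm_num)
    hN hρ₁ hρ₂ (sqrt_nonneg _) hu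
  rw [sq_sqrt (by positivity)] at hweight
  calc exp (-(t ^ 2) / (4 * u)) * u ^ (-(3 : ℝ) / 2) * κ
      ≤ exp (-(t ^ 2) / (4 * u)) * u ^ (-(3 : ℝ) / 2) *
          (C₀ * u ^ (-n / 2) * exp (-(d ^ 2) / (5 * u)) * (1 + √u / ρ₁ + √u / ρ₂) ^ (-N)) := by
        gcongr
    _ = C₀ * (u ^ (-(3 : ℝ) / 2) * u ^ (-n / 2)) *
          (exp (-(t ^ 2) / (4 * u)) * exp (-(d ^ 2) / (5 * u)) *
            (1 + √u / ρ₁ + √u / ρ₂) ^ (-N)) := by ring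
    _ ≤ C₀ * (u ^ (-(3 : ℝ) / 2) * u ^ (-n / 2)) *
          (exp (-((d ^ 2 + t ^ 2) / 10 / u)) *
            (exp (-(d ^ 2 + t ^ 2) / (10 * u)) * (1 + √u / ρ₁ + √u / ρ₂) ^ (-N))) := by
        rw [← mul_assoc (exp _)]
        gcongr _ * (?_ * _)
        exact exp_neg_div_mul_exp_neg_div_le hu
    _ ≤ C₀ * (u ^ (-(3 : ℝ) / 2) * u ^ (-n / 2)) *
          (exp (-((d ^ 2 + t ^ 2) / 10 / u)) * ((1 + 10 ^ ⌈N⌉₊ * ⌈N⌉₊ !) *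
            (1 + √(d ^ 2 + t ^ 2) / ρ₁ + √(d ^ 2 + t ^ 2) / ρ₂) ^ (-N))) := by
        gcongr
    _ = _ := by
        rw [← rpow_add hu, show -(3 : ℝ) / 2 + -n / 2 = -((n + 1) / 2) - 1 by ring]
        ring

theorem stmt_3 (n : ℕ)
    (ρ : EuclideanSpace ℝ (Fin n) → ℝ) (hρ : ∀ x, 0 < ρ x)
    (N : ℝ) (hN : 0 < N)
    (k : ℝ → EuclideanSpace ℝ (Fin n) → EuclideanSpace ℝ (Fin n) → ℝ)
    (C₀ : ℝ) (hC₀ : 0 < C₀)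
    (hk : ∀ (u : ℝ) (x y : EuclideanSpace ℝ (Fin n)), 0 < u →
      k u x y ≤ C₀ * u ^ (-(n : ℝ) / 2) * Real.exp (-(dist x y ^ 2) / (5 * u)) *
        (1 + Real.sqrt u / ρ x + Real.sqrt u / ρ y) ^ (-N)) :
    ∃ C > (0 : ℝ), ∀ (x y : EuclideanSpace ℝ (Fin n)) (t : ℝ), 0 < t →
      (t / (2 * Real.sqrt Real.pi)) *
          ∫ u in Ioi (0 : ℝ), Real.exp (-(t ^ 2) / (4 * u)) * u ^ (-(3 : ℝ) / 2) * k u x y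
        ≤ C * t * (dist x y ^ 2 + t ^ 2) ^ (-((n : ℝ) + 1) / 2) *
          (1 + Real.sqrt (dist x y ^ 2 + t ^ 2) / ρ x +
            Real.sqrt (dist x y ^ 2 + t ^ 2) / ρ y) ^ (-N) := by
  set s : ℝ := ((n : ℝ) + 1) / 2
  have hs : 0 < s := by positivity
  set M : ℝ := 1 + 10 ^ ⌈N⌉₊ * (⌈N⌉₊ ! : ℝ)
  refine ⟨C₀ * M * Gamma s * 10 ^ s / (2 * √π), by positivity, fun x y t ht => ?_⟩
  set D2 := dist x y ^ 2 + t ^ 2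
  have hD2 : 0 < D2 := by positivity
  set W := (1 + √D2 / ρ x + √D2 / ρ y) ^ (-N)
  have hW : 0 ≤ W := rpow_nonneg (by
    have := div_nonneg (sqrt_nonneg D2) (hρ x).le
    have := div_nonneg (sqrt_nonneg D2) (hρ y).le
    linarith) _
  have hbound : ∫ u in Ioi (0 : ℝ), exp (-(t ^ 2) / (4 * u)) * u ^ (-(3 : ℝ) / 2) * k u x y ≤
      ∫ u in Ioi (0 : ℝ), C₀ * M * W * (exp (-(D2 / 10 / u)) * u ^ (-s - 1)) := by
    refine integral_mono_of_nonneg_right ?_ ?_ ?_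
    · filter_upwards [ae_restrict_mem measurableSet_Ioi] with u (hu : 0 < u)
      positivity
    · exact (integrableOn_exp_neg_div_mul_rpow_Ioi (by positivity) hs).const_mul _
    · filter_upwards [ae_restrict_mem measurableSet_Ioi] with u (hu : 0 < u)
      exact subordinate_integrand_le hC₀.le hN.le (hρ x) (hρ y) hu (hk u x y hu)
  rw [integral_const_mul, integral_exp_neg_div_mul_rpow_Ioi (by positivity) hs] at hbound
  calc t / (2 * √π) * ∫ u in Ioi (0 : ℝ), exp (-(t ^ 2) / (4 * u)) * u ^ (-(3 : ℝ) / 2) * k u x y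
      ≤ t / (2 * √π) * (C₀ * M * W * (Gamma s * (D2 / 10) ^ (-s))) := by gcongr
    _ = _ := by
        rw [div_rpow hD2.le (by norm_num), rpow_neg (by norm_num : (0 : ℝ) ≤ 10), div_inv_eq_mul,
          show -((n : ℝ) + 1) / 2 = -s from neg_div _ _]
        ring
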